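/- Let χ be a non-principal Dirichlet character modulo q and k a positive integer. For Re(s) > 1/2 (in the region of analytic continuation), |F_k(χ,s)| ≪_ε k^ε |L(χ,s)|^3, where F_k(χ,s) is the meromorphic continuation of Σ_{n≥1} χ(n) d_3(nk) n^{−s}. -/

import Mathlib

open Finset Complex

/-- The 3-fold divisor function `d₃(n) = ∑_{abc = n} 1`. -/
noncomputable def d3 (n : ℕ) : ℕ := ∑ d ∈ n.divisors, d.divisors.card

/-- The meromorphic continuation of `F_k(χ,s) = ∑ χ(n) d₃(nk) n^{-s}` for `Re(s) > 1/2`,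
given by `A_k(χ,s) · (∏_{p∣k}(1-χ(p)p^{-s})^3) · L(χ,s)^3`. -/
noncomputable def Fk {q : ℕ} [NeZero q] (χ : DirichletCharacter ℂ q) (k : ℕ) (s : ℂ) : ℂ :=
  (∑' n : {n : ℕ // 0 < n ∧ ∀ p : ℕ, p.Prime → p ∣ n → p ∣ k},
      χ (n : ℕ) * d3 (k * n) / ((n : ℕ) : ℂ) ^ s) *
    ((∏ p ∈ k.primeFactors, (1 - χ p * (p : ℂ) ^ (-s)) ^ 3) *
      DirichletCharacter.LFunction χ s ^ 3)

/-
For `Re s ≥ 1/2` every term of `A_k(χ,s)` is bounded by `d(k)² · d(n)²/√n`, because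
`d₃(kn) ≤ d(kn)² ≤ d(k)² d(n)²`. The function `d(n)²/√n` is multiplicative, so its sum over the
`k`-factored `n` is an Euler product over `p ∣ k` whose factors are at most the absolute constant
`E = ∑ (j+1)² 2^{-j/2}`; each factor `1 - χ(p) p^{-s}` has norm at most `2`. Hence
`|F_k(χ,s)| ≤ d(k)² (8E)^{ω(k)} |L(χ,s)|³`, and `d(k)² B^{ω(k)} = ∏_{p^v ∥ k} (v+1)² B ≪_ε k^ε`:
a prime with `p^ε ≥ 4B` contributes at most `p^{vε}`, and each of the finitely many smaller primes
at most a constant times `p^{vε}`, since `(v+1)² ≪_ε 2^{vε}`.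
-/

lemma Nat.card_divisors_mul_le (m n : ℕ) : #(m * n).divisors ≤ #m.divisors * #n.divisors := by
  rw [Nat.divisors_mul]
  exact Finset.card_mul_le

lemma d3_le_card_divisors_sq (n : ℕ) : d3 n ≤ #n.divisors ^ 2 := by
  calc d3 n ≤ ∑ _d ∈ n.divisors, #n.divisors :=
        Finset.sum_le_sum fun d hd => Finset.card_le_card <|
          Nat.divisors_subset_of_dvd (Nat.mem_divisors.mp hd).2 (Nat.mem_divisors.mp hd).1
    _ = #n.divisors ^ 2 := by rw [Finset.sum_const, smul_eq_mul, sq]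

lemma d3_mul_le (k n : ℕ) : d3 (k * n) ≤ #k.divisors ^ 2 * #n.divisors ^ 2 := by
  rw [← mul_pow]
  exact (d3_le_card_divisors_sq _).trans (Nat.pow_le_pow_left (Nat.card_divisors_mul_le k n) 2)

lemma summable_sq_succ_mul_geometric {r : ℝ} (hr : ‖r‖ < 1) :
    Summable fun j : ℕ => ((j : ℝ) + 1) ^ 2 * r ^ j := by
  have h := (summable_pow_mul_geometric_of_norm_lt_one 2 hr).add
    (((summable_pow_mul_geometric_of_norm_lt_one 1 hr).mul_left 2).add
      (summable_geometric_of_norm_lt_one hr))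
  exact h.congr fun j => by ring

lemma sq_succ_mul_pow_le_tsum {r : ℝ} (hr0 : 0 ≤ r) (hr : r < 1) (v : ℕ) :
    ((v : ℝ) + 1) ^ 2 * r ^ v ≤ ∑' j : ℕ, ((j : ℝ) + 1) ^ 2 * r ^ j :=
  (summable_sq_succ_mul_geometric (by rwa [Real.norm_of_nonneg hr0])).le_tsum v
    fun j _ => by positivity

lemma exists_sq_succ_le_mul_pow {a : ℝ} (ha : 1 < a) :
    ∃ M, ∀ v : ℕ, ((v : ℝ) + 1) ^ 2 ≤ M * a ^ v := by
  have ha0 : 0 < a := one_pos.trans ha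
  refine ⟨∑' j : ℕ, ((j : ℝ) + 1) ^ 2 * a⁻¹ ^ j, fun v => ?_⟩
  have h := sq_succ_mul_pow_le_tsum (inv_nonneg.2 ha0.le) (inv_lt_one_of_one_lt₀ ha) v
  rw [inv_pow, ← div_eq_mul_inv, div_le_iff₀ (by positivity)] at h
  exact h

lemma sq_succ_mul_le_pow {B x : ℝ} (hB : 1 ≤ B) (hx : 4 * B ≤ x) {v : ℕ} (hv : v ≠ 0) :
    ((v : ℝ) + 1) ^ 2 * B ≤ x ^ v := by
  have hsucc : (v : ℝ) + 1 ≤ 2 ^ v := by exact_mod_cast Nat.lt_two_pow_self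
  calc ((v : ℝ) + 1) ^ 2 * B ≤ (2 ^ v) ^ 2 * B ^ v := by
        gcongr
        exact le_self_pow₀ hB hv
    _ = (4 * B) ^ v := by rw [mul_pow, ← pow_mul, mul_comm v 2, pow_mul]; norm_num
    _ ≤ x ^ v := by gcongr

noncomputable def divisorWeight (n : ℕ) : ℝ := (#n.divisors : ℝ) ^ 2 / √n

lemma divisorWeight_nonneg (n : ℕ) : 0 ≤ divisorWeight n := by
  unfold divisorWeight; positivity

lemma divisorWeight_one : divisorWeight 1 = 1 := by simp [divisorWeight]

lemma divisorWeight_mul {m n : ℕ} (h : m.Coprime n) :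
    divisorWeight (m * n) = divisorWeight m * divisorWeight n := by
  simp only [divisorWeight, Nat.Coprime.card_divisors_mul h, Nat.cast_mul, Real.sqrt_mul
    (Nat.cast_nonneg m)]
  ring

lemma divisorWeight_prime_pow_le {p : ℕ} (hp : p.Prime) (j : ℕ) :
    divisorWeight (p ^ j) ≤ ((j : ℝ) + 1) ^ 2 * (√2)⁻¹ ^ j := by
  have hsqrt : √2 ≤ √p := Real.sqrt_le_sqrt (by exact_mod_cast hp.two_le)
  have hsqrt_pow : √((p : ℝ) ^ j) = √p ^ j := by
    conv_lhs => rw [← Real.sq_sqrt (Nat.cast_nonneg p), ← pow_mul, mul_comm, pow_mul,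
      Real.sqrt_sq (by positivity)]
  rw [divisorWeight, Nat.divisors_prime_pow hp, Finset.card_map, Finset.card_range, Nat.cast_pow,
    hsqrt_pow, div_eq_mul_inv, ← inv_pow]
  push_cast
  gcongr

noncomputable def eulerFactorBound : ℝ := ∑' j : ℕ, ((j : ℝ) + 1) ^ 2 * (√2)⁻¹ ^ j

lemma summable_eulerFactorBound :
    Summable fun j : ℕ => ((j : ℝ) + 1) ^ 2 * (√2)⁻¹ ^ j :=
  summable_sq_succ_mul_geometric <| by
    rw [Real.norm_of_nonneg (by positivity)]
    exact inv_lt_one_of_one_lt₀ Real.one_lt_sqrt_two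

lemma one_le_eulerFactorBound : 1 ≤ eulerFactorBound := by
  simpa [eulerFactorBound] using summable_eulerFactorBound.le_tsum 0 fun j _ => by positivity

lemma summable_divisorWeight_prime_pow {p : ℕ} (hp : p.Prime) :
    Summable fun j : ℕ => divisorWeight (p ^ j) :=
  summable_eulerFactorBound.of_nonneg_of_le (fun _ => divisorWeight_nonneg _)
    (divisorWeight_prime_pow_le hp)

lemma hasSum_divisorWeight_factoredNumbers (s : Finset ℕ) :
    HasSum (fun m : Nat.factoredNumbers s => divisorWeight m)
      (∏ p ∈ s with p.Prime, ∑' j : ℕ, divisorWeight (p ^ j)) :=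
  (EulerProduct.summable_and_hasSum_factoredNumbers_prod_filter_prime_tsum divisorWeight_one
    (fun h => divisorWeight_mul h) (fun hp => (summable_divisorWeight_prime_pow hp).norm) s).2

lemma prod_tsum_divisorWeight_prime_pow_le (s : Finset ℕ) :
    ∏ p ∈ s with p.Prime, ∑' j : ℕ, divisorWeight (p ^ j) ≤ eulerFactorBound ^ #s :=
  calc ∏ p ∈ s with p.Prime, ∑' j : ℕ, divisorWeight (p ^ j)
      ≤ ∏ p ∈ s with p.Prime, eulerFactorBound := by
        refine Finset.prod_le_prod (fun p _ => tsum_nonneg fun j => divisorWeight_nonneg _)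
          fun p hp => ?_
        have hp := (mem_filter.1 hp).2
        exact (summable_divisorWeight_prime_pow hp).tsum_le_tsum (divisorWeight_prime_pow_le hp)
          summable_eulerFactorBound
    _ ≤ eulerFactorBound ^ #s := by
        rw [Finset.prod_const]
        exact pow_le_pow_right₀ one_le_eulerFactorBound (Finset.card_filter_le _ _)

lemma Nat.mem_factoredNumbers_primeFactors {k n : ℕ} (hk : k ≠ 0) :
    n ∈ Nat.factoredNumbers k.primeFactors ↔ 0 < n ∧ ∀ p : ℕ, p.Prime → p ∣ n → p ∣ k := by
  constructor
  · intro h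
    exact ⟨Nat.pos_of_ne_zero (Nat.ne_zero_of_mem_factoredNumbers h), fun p hp hpn =>
      Nat.dvd_of_mem_primeFactors (Nat.mem_factoredNumbers'.1 h p hp hpn)⟩
  · rintro ⟨-, h⟩
    exact Nat.mem_factoredNumbers'.2 fun p hp hpn => Nat.mem_primeFactors.2 ⟨hp, h p hp hpn, hk⟩

noncomputable def Ak {q : ℕ} (χ : DirichletCharacter ℂ q) (k : ℕ) (s : ℂ) : ℂ :=
  ∑' n : {n : ℕ // 0 < n ∧ ∀ p : ℕ, p.Prime → p ∣ n → p ∣ k},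
    χ (n : ℕ) * d3 (k * n) / ((n : ℕ) : ℂ) ^ s

lemma Fk_eq_Ak_mul {q : ℕ} [NeZero q] (χ : DirichletCharacter ℂ q) (k : ℕ) (s : ℂ) :
    Fk χ k s = Ak χ k s * ((∏ p ∈ k.primeFactors, (1 - χ p * (p : ℂ) ^ (-s)) ^ 3) *
      DirichletCharacter.LFunction χ s ^ 3) :=
  rfl

lemma norm_Ak_term_le {q : ℕ} (χ : DirichletCharacter ℂ q) (k : ℕ) {n : ℕ} (hn : 0 < n) {s : ℂ}
    (hs : 1 / 2 ≤ s.re) :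
    ‖χ n * d3 (k * n) / (n : ℂ) ^ s‖ ≤ (#k.divisors : ℝ) ^ 2 * divisorWeight n := by
  have hsqrt : √(n : ℝ) ≤ (n : ℝ) ^ s.re := by
    rw [Real.sqrt_eq_rpow]
    exact Real.rpow_le_rpow_of_exponent_le (Nat.one_le_cast.2 hn) hs
  have hd3 : (d3 (k * n) : ℝ) ≤ (#k.divisors : ℝ) ^ 2 * (#n.divisors : ℝ) ^ 2 := by
    exact_mod_cast d3_mul_le k n
  rw [norm_div, norm_mul, norm_natCast_cpow_of_pos hn, Complex.norm_natCast, divisorWeight,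
    mul_div_assoc']
  calc ‖χ n‖ * d3 (k * n) / (n : ℝ) ^ s.re
      ≤ 1 * ((#k.divisors : ℝ) ^ 2 * (#n.divisors : ℝ) ^ 2) / √(n : ℝ) := by
        gcongr
        exact χ.norm_le_one _
    _ = _ := by rw [one_mul]

lemma norm_Ak_le {q : ℕ} (χ : DirichletCharacter ℂ q) {k : ℕ} (hk : k ≠ 0) {s : ℂ}
    (hs : 1 / 2 ≤ s.re) :
    ‖Ak χ k s‖ ≤ (#k.divisors : ℝ) ^ 2 * eulerFactorBound ^ #k.primeFactors := by
  let e : {n : ℕ // 0 < n ∧ ∀ p : ℕ, p.Prime → p ∣ n → p ∣ k} ≃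
      Nat.factoredNumbers k.primeFactors :=
    Equiv.subtypeEquivRight fun n => (Nat.mem_factoredNumbers_primeFactors hk).symm
  have hsum := (e.hasSum_iff.2 (hasSum_divisorWeight_factoredNumbers k.primeFactors)).mul_left
    ((#k.divisors : ℝ) ^ 2)
  refine (tsum_of_norm_bounded hsum fun n => norm_Ak_term_le χ k n.2.1 hs).trans ?_
  gcongr
  exact prod_tsum_divisorWeight_prime_pow_le _

lemma norm_one_sub_mul_cpow_le {q : ℕ} (χ : DirichletCharacter ℂ q) {p : ℕ} (hp : 0 < p) {s : ℂ}
    (hs : 0 ≤ s.re) : ‖1 - χ p * (p : ℂ) ^ (-s)‖ ≤ 2 := by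
  have hpow : ‖(p : ℂ) ^ (-s)‖ ≤ 1 := by
    rw [norm_natCast_cpow_of_pos hp, neg_re]
    exact Real.rpow_le_one_of_one_le_of_nonpos (Nat.one_le_cast.2 hp) (neg_nonpos.2 hs)
  calc ‖1 - χ p * (p : ℂ) ^ (-s)‖ ≤ ‖(1 : ℂ)‖ + ‖χ p‖ * ‖(p : ℂ) ^ (-s)‖ := by
        rw [← norm_mul]; exact norm_sub_le _ _
    _ ≤ 1 + 1 * 1 := by rw [norm_one]; gcongr; exact χ.norm_le_one _
    _ = 2 := by norm_num

lemma norm_prod_primeFactors_le {q : ℕ} (χ : DirichletCharacter ℂ q) (k : ℕ) {s : ℂ}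
    (hs : 0 ≤ s.re) :
    ‖∏ p ∈ k.primeFactors, (1 - χ p * (p : ℂ) ^ (-s)) ^ 3‖ ≤ 8 ^ #k.primeFactors := by
  rw [norm_prod, ← Finset.prod_const]
  refine Finset.prod_le_prod (fun _ _ => norm_nonneg _) fun p hp => ?_
  rw [norm_pow, show (8 : ℝ) = 2 ^ 3 by norm_num]
  gcongr
  exact norm_one_sub_mul_cpow_le χ (Nat.pos_of_mem_primeFactors hp) hs

lemma rpow_eq_prod_primeFactors {k : ℕ} (hk : k ≠ 0) (ε : ℝ) :
    (k : ℝ) ^ ε = ∏ p ∈ k.primeFactors, ((p : ℝ) ^ ε) ^ k.factorization p := by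
  conv_lhs => rw [← Nat.prod_factorization_pow_eq_self hk]
  rw [Nat.prod_factorization_eq_prod_primeFactors, Nat.cast_prod,
    ← Real.finsetProd_rpow _ _ fun p _ => by positivity]
  refine Finset.prod_congr rfl fun p _ => ?_
  rw [Nat.cast_pow, Real.rpow_pow_comm (Nat.cast_nonneg p)]

lemma card_divisors_sq_mul_pow_eq_prod {k : ℕ} (hk : k ≠ 0) (B : ℝ) :
    (#k.divisors : ℝ) ^ 2 * B ^ #k.primeFactors =
      ∏ p ∈ k.primeFactors, ((k.factorization p : ℝ) + 1) ^ 2 * B := by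
  rw [Finset.prod_mul_distrib, Finset.prod_const, Finset.prod_pow, Nat.card_divisors hk]
  push_cast
  rfl

lemma prod_ite_le_pow_succ (s : Finset ℕ) (N : ℕ) {a : ℝ} (ha : 1 ≤ a) :
    ∏ p ∈ s, (if p ≤ N then a else 1) ≤ a ^ (N + 1) := by
  rw [Finset.prod_ite, Finset.prod_const, Finset.prod_const_one, mul_one]
  refine pow_le_pow_right₀ ha ((Finset.card_le_card fun p hp => ?_).trans (Finset.card_range _).le)
  exact Finset.mem_range.2 (Nat.lt_succ_of_le (Finset.mem_filter.1 hp).2)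

lemma le_rpow_of_ceil_rpow_inv_lt {x ε : ℝ} (hx : 0 ≤ x) (hε : 0 < ε) {p : ℕ}
    (hp : ⌈x ^ ε⁻¹⌉₊ < p) : x ≤ (p : ℝ) ^ ε :=
  calc x = (x ^ ε⁻¹) ^ ε := by rw [← Real.rpow_mul hx, inv_mul_cancel₀ hε.ne', Real.rpow_one]
    _ ≤ (p : ℝ) ^ ε := by
      gcongr
      exact (Nat.le_ceil _).trans (by exact_mod_cast hp.le)

theorem exists_card_divisors_sq_mul_pow_le {B ε : ℝ} (hB : 1 ≤ B) (hε : 0 < ε) :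
    ∃ C, ∀ k : ℕ, k ≠ 0 → (#k.divisors : ℝ) ^ 2 * B ^ #k.primeFactors ≤ C * (k : ℝ) ^ ε := by
  obtain ⟨M, hM⟩ := exists_sq_succ_le_mul_pow (Real.one_lt_rpow (by norm_num : (1 : ℝ) < 2) hε)
  have hM1 : 1 ≤ M := by simpa using hM 0
  set N := ⌈(4 * B) ^ ε⁻¹⌉₊
  refine ⟨(M * B) ^ (N + 1), fun k hk => ?_⟩
  have hfactor : ∀ p ∈ k.primeFactors, ((k.factorization p : ℝ) + 1) ^ 2 * B ≤
      (if p ≤ N then M * B else 1) * ((p : ℝ) ^ ε) ^ k.factorization p := by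
    intro p hp
    have hp2 : (2 : ℝ) ≤ p := by exact_mod_cast (Nat.prime_of_mem_primeFactors hp).two_le
    split_ifs with hpN
    · calc ((k.factorization p : ℝ) + 1) ^ 2 * B
          ≤ M * ((2 : ℝ) ^ ε) ^ k.factorization p * B := by gcongr; exact hM _
        _ ≤ M * B * ((p : ℝ) ^ ε) ^ k.factorization p := by rw [mul_right_comm]; gcongr
    · rw [one_mul]
      exact sq_succ_mul_le_pow hB (le_rpow_of_ceil_rpow_inv_lt (by positivity) hε (not_le.1 hpN))
        ((Nat.prime_of_mem_primeFactors hp).factorization_pos_of_dvd hk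
          (Nat.dvd_of_mem_primeFactors hp)).ne'
  calc (#k.divisors : ℝ) ^ 2 * B ^ #k.primeFactors
      = ∏ p ∈ k.primeFactors, ((k.factorization p : ℝ) + 1) ^ 2 * B :=
        card_divisors_sq_mul_pow_eq_prod hk B
    _ ≤ ∏ p ∈ k.primeFactors, (if p ≤ N then M * B else 1) * ((p : ℝ) ^ ε) ^ k.factorization p :=
        Finset.prod_le_prod (fun _ _ => by positivity) hfactor
    _ = (∏ p ∈ k.primeFactors, if p ≤ N then M * B else 1) *
          ∏ p ∈ k.primeFactors, ((p : ℝ) ^ ε) ^ k.factorization p :=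
        Finset.prod_mul_distrib
    _ ≤ (M * B) ^ (N + 1) * (k : ℝ) ^ ε := by
        rw [rpow_eq_prod_primeFactors hk]
        gcongr
        exact prod_ite_le_pow_succ _ _ (one_le_mul_of_one_le_of_one_le hM1 hB)

theorem Fk_nonprincipal_bound_general (ε : ℝ) (hε : 0 < ε) (q : ℕ) [NeZero q]
    (χ : DirichletCharacter ℂ q) :
    ∃ C : ℝ, ∀ k : ℕ, 0 < k → ∀ s : ℂ, 1 / 2 < s.re →
      ‖Fk χ k s‖ ≤ C * (k : ℝ) ^ ε * ‖DirichletCharacter.LFunction χ s‖ ^ 3 := by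
  obtain ⟨C, hC⟩ := exists_card_divisors_sq_mul_pow_le
    (by linarith [one_le_eulerFactorBound] : 1 ≤ 8 * eulerFactorBound) hε
  refine ⟨C, fun k hk s hs => ?_⟩
  have hA := norm_Ak_le χ hk.ne' hs.le
  have hP := norm_prod_primeFactors_le χ k (by linarith : 0 ≤ s.re)
  rw [Fk_eq_Ak_mul, norm_mul, norm_mul, norm_pow]
  calc ‖Ak χ k s‖ * (‖∏ p ∈ k.primeFactors, (1 - χ p * (p : ℂ) ^ (-s)) ^ 3‖ *
        ‖DirichletCharacter.LFunction χ s‖ ^ 3)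
      ≤ (#k.divisors : ℝ) ^ 2 * eulerFactorBound ^ #k.primeFactors *
          (8 ^ #k.primeFactors * ‖DirichletCharacter.LFunction χ s‖ ^ 3) := by
        gcongr
        exact (norm_nonneg _).trans hA
    _ = (#k.divisors : ℝ) ^ 2 * (8 * eulerFactorBound) ^ #k.primeFactors *
          ‖DirichletCharacter.LFunction χ s‖ ^ 3 := by
        ring
    _ ≤ C * (k : ℝ) ^ ε * ‖DirichletCharacter.LFunction χ s‖ ^ 3 :=
        mul_le_mul_of_nonneg_right (hC k hk.ne') (by positivity)

/-- For non-principal `χ` and `Re(s) > 1/2`, `|F_k(χ,s)| ≪_ε k^ε |L(χ,s)|^3`. -/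
theorem Fk_nonprincipal_bound (ε : ℝ) (hε : 0 < ε) (q : ℕ) [NeZero q]
    (χ : DirichletCharacter ℂ q) (hχ : χ ≠ 1) :
    ∃ C : ℝ, ∀ k : ℕ, 0 < k → ∀ s : ℂ, 1 / 2 < s.re →
      ‖Fk χ k s‖ ≤ C * (k : ℝ) ^ ε * ‖DirichletCharacter.LFunction χ s‖ ^ 3 :=
  Fk_nonprincipal_bound_general ε hε q χ
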